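/- Let H = P_1 P_2 ⋯ P_h be a tower of height h in a finite group G. Then for every 1 ≤ i ≤ h, the subgroup P_i is generated by the δ_{i-1}*-commutators of G contained in P_i. -/

import Mathlib

/-!
Induct on `i`. In a tower, `P_{i-1}` normalizes `P_i` and `P_i = [P_i, P_{i-1}]`, and by induction
both are generated by their `δ_{i-2}*`-commutators. The subgroup `N` generated by the
`δ_{i-1}*`-commutators in `P_i` is normalized by `P_i` and `P_{i-1}`, so `[P_i, P_{i-1}] ≤ N` as
soon as `[a, b] ∈ N` for all those generators `a ∈ P_i`, `b ∈ P_{i-1}`. If the two primes differ,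
`a` and `b` have coprime orders, so `[a, b]` is a `δ_{i-1}*`-commutator. If they coincide,
`P_i P_{i-1}` is a nilpotent `p`-group, and then `P_i = [P_i, P_{i-1}]` forces `P_i = 1`.
-/

/-- The set of `δ_k*`-commutators of a group: every element is a
`δ_0*`-commutator; for `k ≥ 1`, an element is a `δ_k*`-commutator if it equals
`[a,b]` where `a` and `b` are powers of `δ_{k-1}*`-commutators and have
coprime orders. -/
def deltaStar (G : Type*) [Group G] : ℕ → Set G
  | 0 => Set.univ
  | k + 1 => {x : G | ∃ a b : G,
      (∃ c ∈ deltaStar G k, ∃ n : ℕ, a = c ^ n) ∧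
      (∃ c ∈ deltaStar G k, ∃ n : ℕ, b = c ^ n) ∧
      Nat.Coprime (orderOf a) (orderOf b) ∧
      x = a⁻¹ * b⁻¹ * a * b}

open Subgroup
open scoped commutatorElement

section

variable {G : Type*} [Group G]

theorem map_mem_deltaStar {H : Type*} [Group H] {f : G →* H} (hf : Function.Injective f) :
    ∀ {k : ℕ} {x : G}, x ∈ deltaStar G k → f x ∈ deltaStar H k
  | 0, _, _ => Set.mem_univ _
  | k + 1, _, ⟨_, _, ⟨c, hc, n, rfl⟩, ⟨d, hd, m, rfl⟩, hcop, rfl⟩ =>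
    ⟨f c ^ n, f d ^ m, ⟨f c, map_mem_deltaStar hf hc, n, rfl⟩,
      ⟨f d, map_mem_deltaStar hf hd, m, rfl⟩,
      by rwa [← map_pow, ← map_pow, orderOf_injective f hf, orderOf_injective f hf],
      by simp only [map_mul, map_inv, map_pow]⟩

theorem conj_mem_deltaStar_iff {k : ℕ} {g x : G} :
    g * x * g⁻¹ ∈ deltaStar G k ↔ x ∈ deltaStar G k := by
  refine ⟨fun hx => ?_, fun hx => ?_⟩
  · simpa [mul_assoc] using
      map_mem_deltaStar (f := (MulAut.conj g⁻¹).toMonoidHom) (MulAut.conj g⁻¹).injective hx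
  · simpa using map_mem_deltaStar (f := (MulAut.conj g).toMonoidHom) (MulAut.conj g).injective hx

theorem normalizer_le_normalizer_inter_deltaStar (S : Set G) (k : ℕ) :
    normalizer S ≤ normalizer (S ∩ deltaStar G k) := fun _ hg x =>
  and_congr (mem_set_normalizer_iff.mp hg x) conj_mem_deltaStar_iff.symm

theorem commutatorElement_mem_deltaStar_succ {k : ℕ} {a b : G}
    (ha : a ∈ deltaStar G k) (hb : b ∈ deltaStar G k)
    (ha' : IsOfFinOrder a) (hb' : IsOfFinOrder b) (hab : (orderOf a).Coprime (orderOf b)) :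
    ⁅a, b⁆ ∈ deltaStar G (k + 1) := by
  -- `deltaStar` is built from `a⁻¹ * b⁻¹ * a * b = ⁅a⁻¹, b⁻¹⁆`, and `a⁻¹`, `b⁻¹` are powers
  obtain ⟨n, hn⟩ := ha'.mem_powers_iff_mem_zpowers.mpr (inv_mem (mem_zpowers a))
  obtain ⟨m, hm⟩ := hb'.mem_powers_iff_mem_zpowers.mpr (inv_mem (mem_zpowers b))
  refine ⟨a⁻¹, b⁻¹, ⟨a, ha, n, hn.symm⟩, ⟨b, hb, m, hm.symm⟩, ?_, ?_⟩
  · rwa [orderOf_inv, orderOf_inv]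
  · simp only [commutatorElement_def, inv_inv]

theorem commutatorElement_mem_of_mem_closure_left {N : Subgroup G} {S : Set G}
    (hS : closure S ≤ normalizer (N : Set G)) {y : G} (h : ∀ s ∈ S, ⁅s, y⁆ ∈ N)
    {x : G} (hx : x ∈ closure S) : ⁅x, y⁆ ∈ N := by
  induction hx using closure_induction with
  | mem s hs => exact h s hs
  | one => simp only [commutatorElement_one_left, one_mem]
  | mul x₁ x₂ hx₁ _ ih₁ ih₂ =>
    rw [commutatorElement_mul_left_eq_conj_mul]
    exact mul_mem ((mem_normalizer_iff.mp (hS hx₁) _).mp ih₂) ih₁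
  | inv x hx ih =>
    rw [commutatorElement_inv_left, ← commutatorElement_inv]
    exact (mem_normalizer_iff''.mp (hS hx) _).mp (inv_mem ih)

theorem Subgroup.commutator_closure_le {N : Subgroup G} {S T : Set G}
    (hS : closure S ≤ normalizer (N : Set G)) (hT : closure T ≤ normalizer (N : Set G))
    (h : ∀ s ∈ S, ∀ t ∈ T, ⁅s, t⁆ ∈ N) : ⁅closure S, closure T⁆ ≤ N := by
  refine commutator_le.mpr fun x hx y hy => ?_
  have hxT : ∀ t ∈ T, ⁅t, x⁆ ∈ N := fun t ht => by
    rw [← commutatorElement_inv]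
    exact inv_mem (commutatorElement_mem_of_mem_closure_left hS (fun s hs => h s hs t ht) hx)
  rw [← commutatorElement_inv]
  exact inv_mem (commutatorElement_mem_of_mem_closure_left hT hxT hy)

theorem Subgroup.eq_bot_of_le_commutator {P S : Subgroup G} [Group.IsNilpotent S] (hPS : P ≤ S)
    (h : P ≤ ⁅P, S⁆) : P = ⊥ := by
  obtain ⟨n, hn⟩ := (isNilpotent_iff_lowerCentralSeries S).mp inferInstance
  have hle : ∀ m, P ≤ S.lowerCentralSeries m := by
    intro m
    induction m with
    | zero => exact hPS
    | succ m ih => exact h.trans (commutator_mono ih le_rfl)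
  exact eq_bot_iff.mpr (hn ▸ hle n)

variable {p q : ℕ} [Fact p.Prime] [Fact q.Prime] {P Q : Subgroup G}

theorem IsPGroup.exists_orderOf_eq_pow_of_mem (hP : IsPGroup p P) {x : G} (hx : x ∈ P) :
    ∃ n, orderOf x = p ^ n := by
  simpa only [orderOf_mk] using hP.exists_orderOf_eq_pow ⟨x, hx⟩

theorem IsPGroup.isOfFinOrder_of_mem (hP : IsPGroup p P) {x : G} (hx : x ∈ P) :
    IsOfFinOrder x := by
  obtain ⟨n, hn⟩ := hP.exists_orderOf_eq_pow_of_mem hx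
  exact orderOf_pos_iff.mp (hn ▸ pow_pos (Fact.out : p.Prime).pos n)

theorem IsPGroup.coprime_orderOf_of_ne (hP : IsPGroup p P) (hQ : IsPGroup q Q) (hpq : p ≠ q)
    {x y : G} (hx : x ∈ P) (hy : y ∈ Q) : (orderOf x).Coprime (orderOf y) := by
  obtain ⟨m, hm⟩ := hP.exists_orderOf_eq_pow_of_mem hx
  obtain ⟨n, hn⟩ := hQ.exists_orderOf_eq_pow_of_mem hy
  rw [hm, hn]
  exact Nat.coprime_pow_primes m n Fact.out Fact.out hpq

theorem IsPGroup.eq_bot_of_commutator_eq_self [Finite G] (hP : IsPGroup p P) (hQ : IsPGroup p Q)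
    (hQP : Q ≤ normalizer (P : Set G)) (hcomm : ⁅P, Q⁆ = P) : P = ⊥ := by
  have := (hP.to_sup_of_normal_left' hQ hQP).isNilpotent
  refine eq_bot_of_le_commutator (S := P ⊔ Q) le_sup_left ?_
  exact hcomm.symm.le.trans (commutator_mono le_rfl le_sup_right)

theorem eq_closure_inter_deltaStar_succ_of_ne (hP : IsPGroup p P) (hQ : IsPGroup q Q)
    (hpq : p ≠ q) (hQP : Q ≤ normalizer (P : Set G)) (hcomm : ⁅P, Q⁆ = P) {k : ℕ}
    (hPk : P = closure ((P : Set G) ∩ deltaStar G k))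
    (hQk : Q = closure ((Q : Set G) ∩ deltaStar G k)) :
    P = closure ((P : Set G) ∩ deltaStar G (k + 1)) := by
  set N := closure ((P : Set G) ∩ deltaStar G (k + 1))
  have hN : normalizer (P : Set G) ≤ normalizer (N : Set G) :=
    (normalizer_le_normalizer_inter_deltaStar _ _).trans (normalizer_le_normalizer_closure _)
  refine le_antisymm ?_ (closure_le _ |>.mpr Set.inter_subset_left)
  calc P = ⁅closure ((P : Set G) ∩ deltaStar G k), closure ((Q : Set G) ∩ deltaStar G k)⁆ := by
        rw [← hPk, ← hQk, hcomm]
    _ ≤ N := by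
      refine commutator_closure_le (hPk ▸ le_normalizer.trans hN) (hQk ▸ hQP.trans hN) ?_
      rintro a ⟨haP, ha⟩ b ⟨hbQ, hb⟩
      refine subset_closure ⟨hcomm ▸ commutator_mem_commutator haP hbQ, ?_⟩
      exact commutatorElement_mem_deltaStar_succ ha hb (hP.isOfFinOrder_of_mem haP)
        (hQ.isOfFinOrder_of_mem hbQ) (hP.coprime_orderOf_of_ne hQ hpq haP hbQ)

theorem eq_closure_inter_deltaStar_succ [Finite G] (hP : IsPGroup p P) (hQ : IsPGroup q Q)
    (hQP : Q ≤ normalizer (P : Set G)) (hcomm : ⁅P, Q⁆ = P) {k : ℕ}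
    (hPk : P = closure ((P : Set G) ∩ deltaStar G k))
    (hQk : Q = closure ((Q : Set G) ∩ deltaStar G k)) :
    P = closure ((P : Set G) ∩ deltaStar G (k + 1)) := by
  by_cases hpq : p = q
  · subst hpq
    have hbot := hP.eq_bot_of_commutator_eq_self hQ hQP hcomm
    exact le_antisymm (hbot ▸ bot_le) (closure_le _ |>.mpr Set.inter_subset_left)
  · exact eq_closure_inter_deltaStar_succ_of_ne hP hQ hpq hQP hcomm hPk hQk

end

theorem tower_subgroup_generated_by_deltaStar_general (G : Type*) [Group G] [Finite G]
    (h : ℕ) (P : Fin h → Subgroup G) (p : Fin h → ℕ)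
    (hprime : ∀ i, (p i).Prime)
    (hp : ∀ i, IsPGroup (p i) (P i))
    (hnormalize : ∀ i j : Fin h, i < j → P i ≤ Subgroup.normalizer (P j : Set G))
    (hcomm : ∀ i j : Fin h, (j : ℕ) + 1 = (i : ℕ) → ⁅P i, P j⁆ = P i) :
    ∀ i : Fin h, P i = Subgroup.closure {x : G | x ∈ P i ∧ x ∈ deltaStar G (i : ℕ)} := by
  suffices key : ∀ (k : ℕ) (j : Fin h), k ≤ j → P j = closure ((P j : Set G) ∩ deltaStar G k) from
    fun i => key i i le_rfl
  intro k
  induction k with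
  | zero => intro j _; simp [deltaStar]
  | succ k ih =>
    intro j hj
    let j' : Fin h := ⟨j - 1, by omega⟩
    have hj' : (j' : ℕ) + 1 = j := by simp only [j']; omega
    have := Fact.mk (hprime j)
    have := Fact.mk (hprime j')
    exact eq_closure_inter_deltaStar_succ (hp j) (hp j') (hnormalize j' j (by omega))
      (hcomm j j' hj') (ih j (by omega)) (ih j' (by omega))

/-- If `P_1 ⋯ P_h` is a tower of height `h` in a finite group `G` (here
zero-indexed as `P 0, …, P (h-1)`), then each `P_i` is generated by the
`δ_{i-1}*`-commutators it contains (zero-indexed: `P i` by the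
`δ_i*`-commutators it contains). -/
theorem tower_subgroup_generated_by_deltaStar (G : Type*) [Group G] [Finite G]
    (h : ℕ) (hh : 1 ≤ h) (P : Fin h → Subgroup G) (p : Fin h → ℕ)
    (hprime : ∀ i, (p i).Prime)
    (hp : ∀ i, IsPGroup (p i) (P i))
    (hnormalize : ∀ i j : Fin h, i < j → P i ≤ Subgroup.normalizer (P j : Set G))
    (hcomm : ∀ i j : Fin h, (j : ℕ) + 1 = (i : ℕ) → ⁅P i, P j⁆ = P i) :
    ∀ i : Fin h, P i = Subgroup.closure {x : G | x ∈ P i ∧ x ∈ deltaStar G (i : ℕ)} :=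
  tower_subgroup_generated_by_deltaStar_general G h P p hprime hp hnormalize hcomm
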